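/- Let W be a Banach space, T > 0, and let G : [0,T] → L(W) be strongly continuous with G(0) = I, G(t) compact for every t ∈ (0,T], and t ↦ G(t) operator-norm continuous on (0,T]. Define 𝒢 : L¹([0,T];W) → C([0,T];W) by (𝒢 g)(t) = ∫₀ᵗ G(t−s) g(s) ds. If (gₙ)ₙ ⊂ L¹([0,T];W) is integrably bounded, i.e., there exists φ ∈ L¹([0,T];ℝ₊) with ‖gₙ(t)‖_W ≤ φ(t) for a.e. t ∈ [0,T] and all n, then the sequence (𝒢 gₙ)ₙ is relatively compact in C([0,T];W). -/

import Mathlib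

/-!
By Arzelà–Ascoli it suffices to show that the functions `𝒢 gₙ` are equicontinuous and take values
in a fixed compact set at each time `t`; Banach–Steinhaus bounds `‖G r‖ ≤ M` on `[0, T]`.

At a fixed `t`, split `∫₀ᵗ` at `t - δ`. The tail is at most `M ∫ φ` over an interval of length
`δ`, small by absolute continuity of the integral. On the head, `G (t - s)` ranges over the
norm-compact set `G '' [δ, T]` of compact operators, so `G (t - s) (gₙ s) ∈ φ s • D` for a compact
convex `D` not depending on `n`, whence the head lies in the compact set `[0, ∫ φ] • D`.

For `a ≤ b`, `𝒢 g b - 𝒢 g a` consists of `∫ (G (b - s) - G (a - s)) (g s)` over `[0, a - δ]`,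
small by uniform norm continuity of `G` on `[δ, T]`, and two integrals over intervals of length
at most `δ`, small again by absolute continuity.
-/

open MeasureTheory Set Metric
open scoped Pointwise

theorem Metric.totallyBounded_of_forall_subset_thickening {α : Type*} [PseudoMetricSpace α]
    {s : Set α} (h : ∀ ε > 0, ∃ t, TotallyBounded t ∧ s ⊆ thickening ε t) :
    TotallyBounded s := by
  refine Metric.totallyBounded_iff.mpr fun ε hε => ?_
  obtain ⟨t, ht, hst⟩ := h (ε / 2) (half_pos hε)
  obtain ⟨F, hF, htF⟩ := Metric.totallyBounded_iff.mp ht (ε / 2) (half_pos hε)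
  refine ⟨F, hF, fun x hx => ?_⟩
  obtain ⟨z, hz, hxz⟩ := mem_thickening_iff.mp (hst hx)
  obtain ⟨y, hy, hzy⟩ := mem_iUnion₂.mp (htF hz)
  exact mem_iUnion₂.mpr ⟨y, hy, mem_ball.mpr (by linarith [dist_triangle x z y, mem_ball.mp hzy])⟩

theorem IsCompact.exists_bound_of_continuousOn_apply {X 𝕜 E F : Type*} [TopologicalSpace X]
    [NontriviallyNormedField 𝕜] [NormedAddCommGroup E] [NormedSpace 𝕜 E] [CompleteSpace E]
    [NormedAddCommGroup F] [NormedSpace 𝕜 F] {K : Set X} (hK : IsCompact K)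
    {G : X → E →L[𝕜] F} (hG : ∀ w, ContinuousOn (fun r => G r w) K) :
    ∃ M, ∀ r ∈ K, ‖G r‖ ≤ M := by
  have hbdd : ∀ w, ∃ C, ∀ r : K, ‖G r w‖ ≤ C := fun w =>
    (hK.exists_bound_of_continuousOn (hG w)).imp fun C hC r => hC r r.2
  obtain ⟨M, hM⟩ := banach_steinhaus hbdd
  exact ⟨M, fun r hr => hM ⟨r, hr⟩⟩

theorem IsCompact.totallyBounded_image2_apply_closedBall {𝕜 E F : Type*}
    [NontriviallyNormedField 𝕜] [SeminormedAddCommGroup E] [NormedSpace 𝕜 E]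
    [NormedAddCommGroup F] [NormedSpace 𝕜 F] {K : Set (E →L[𝕜] F)} (hK : IsCompact K)
    (hKc : ∀ A ∈ K, IsCompactOperator A) (r : ℝ) :
    TotallyBounded (image2 (fun A w => A w) K (closedBall 0 r)) := by
  refine totallyBounded_of_forall_subset_thickening fun ε hε => ?_
  obtain ⟨t, htK, htfin, hKt⟩ :=
    finite_cover_balls_of_compact hK (e := ε / (|r| + 1)) (by positivity)
  refine ⟨⋃ A ∈ t, A '' closedBall 0 r, ?_, ?_⟩
  · refine (totallyBounded_biUnion htfin).mpr fun A hA => ?_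
    exact ((hKc A (htK hA)).isCompact_closure_image_closedBall r).totallyBounded.subset
      subset_closure
  · rintro _ ⟨A, hA, w, hw, rfl⟩
    obtain ⟨A', hA', hAA'⟩ := mem_iUnion₂.mp (hKt hA)
    refine mem_thickening_iff.mpr ⟨A' w, mem_iUnion₂.mpr ⟨A', hA', w, hw, rfl⟩, ?_⟩
    have hw : ‖w‖ ≤ |r| := (mem_closedBall_zero_iff.mp hw).trans (le_abs_self r)
    calc dist (A w) (A' w) = ‖(A - A') w‖ := by rw [dist_eq_norm, sub_apply]
      _ ≤ ‖A - A'‖ * ‖w‖ := (A - A').le_opNorm w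
      _ ≤ ε / (|r| + 1) * |r| := by
        gcongr
        exact (dist_eq_norm A A' ▸ mem_ball.mp hAA').le
      _ < ε := by
        rw [div_mul_eq_mul_div, div_lt_iff₀ (by positivity)]
        nlinarith [abs_nonneg r]

theorem ContinuousMap.isCompact_closure_of_equicontinuous {X α : Type*} [TopologicalSpace X]
    [CompactlyCoherentSpace X] [UniformSpace α] [T2Space α] {S : Set C(X, α)}
    (hS : Equicontinuous ((↑) : S → X → α))
    (hpt : ∀ x, ∃ Q, IsCompact Q ∧ ∀ F ∈ S, F x ∈ Q) :
    IsCompact (closure S) := by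
  have hemb : Topology.IsClosedEmbedding
      (UniformOnFun.ofFun {K : Set X | IsCompact K} ∘ (DFunLike.coe : C(X, α) → X → α)) := by
    refine ⟨isUniformEmbedding_toUniformOnFunIsCompact.isEmbedding, ?_⟩
    change IsClosed (range toUniformOnFunIsCompact)
    rw [range_toUniformOnFunIsCompact]
    exact UniformOnFun.isClosed_setOfPred_continuous CompactlyCoherentSpace.isCoherentWith
  exact ArzelaAscoli.isCompact_closure_of_isClosedEmbedding (fun _ hK => hK) hemb
    (fun K _ => hS.equicontinuousOn K) (fun _ _ x _ => hpt x)

theorem integral_mem_smul_of_ae_mem_smul {α E : Type*} [MeasurableSpace α] {μ : Measure α}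
    [NormedAddCommGroup E] [NormedSpace ℝ E] [CompleteSpace E] {D : Set E}
    (hDconv : Convex ℝ D) (hDclosed : IsClosed D) (hDne : D.Nonempty)
    {φ : α → ℝ} (hφ : Integrable φ μ) (hφ0 : 0 ≤ᵐ[μ] φ)
    {F : α → E} (hF : Integrable F μ) (hFD : ∀ᵐ x ∂μ, F x ∈ φ x • D) :
    ∫ x, F x ∂μ ∈ (∫ x, φ x ∂μ) • D := by
  obtain ⟨d, hd⟩ := hDne
  -- `F = φ • y` with `y` valued in `D`, so `∫ F dμ = ∫ y dν = ν univ • ⨍ y dν` for `ν = φ μ`.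
  set ν := μ.withDensity fun x => ENNReal.ofReal (φ x)
  have hφm : AEMeasurable (fun x => ENNReal.ofReal (φ x)) μ := hφ.aemeasurable.ennreal_ofReal
  have hlt : ∀ᵐ x ∂μ, ENNReal.ofReal (φ x) < ⊤ := ae_of_all _ fun _ => ENNReal.ofReal_lt_top
  have htoReal : ∀ᵐ x ∂μ, (ENNReal.ofReal (φ x)).toReal = φ x :=
    hφ0.mono fun x hx => ENNReal.toReal_ofReal hx
  have : IsFiniteMeasure ν := isFiniteMeasure_withDensity_ofReal hφ.2
  let y : α → E := fun x => if φ x = 0 then d else (φ x)⁻¹ • F x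
  have hFy : ∀ᵐ x ∂μ, (ENNReal.ofReal (φ x)).toReal • y x = F x := by
    filter_upwards [hFD, htoReal] with x hx hx'
    rw [hx']
    by_cases h : φ x = 0
    · simp only [h, zero_smul, Set.zero_smul_set ⟨d, hd⟩] at hx ⊢
      exact hx.symm
    · simp only [y, if_neg h, smul_inv_smul₀ h]
  have hyD : ∀ᵐ x ∂ν, y x ∈ D := by
    refine (withDensity_absolutelyContinuous μ _).ae_le (hFD.mono fun x hx => ?_)
    by_cases h : φ x = 0
    · simp only [y, if_pos h, hd]
    · obtain ⟨e, he, hex⟩ := hx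
      simp only [y, if_neg h, ← hex, inv_smul_smul₀ h, he]
  have hyint : Integrable y ν := by
    rw [integrable_withDensity_iff_integrable_smul₀' hφm hlt]
    exact hF.congr (hFy.mono fun x hx => hx.symm)
  have hFν : ∫ x, F x ∂μ = ∫ x, y x ∂ν := by
    rw [integral_withDensity_eq_integral_toReal_smul₀ hφm hlt]
    exact integral_congr_ae (hFy.mono fun x hx => hx.symm)
  have hmass : ν.real univ = ∫ x, φ x ∂μ := by
    have := integral_withDensity_eq_integral_toReal_smul₀ hφm hlt fun _ => (1 : ℝ)
    simp only [integral_const, smul_eq_mul, mul_one] at this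
    rw [this]
    exact integral_congr_ae htoReal
  rw [hFν, ← hmass]
  rcases eq_zero_or_neZero ν with hν | hν
  · simp [hν, Set.zero_smul_set ⟨d, hd⟩]
  · rw [← integral_average, integral_const]
    exact smul_mem_smul_set (hDconv.average_mem hDclosed hyD hyint)

section BallImageHull

variable {E F : Type*} [NormedAddCommGroup E] [NormedSpace ℝ E] [NormedAddCommGroup F]
  [NormedSpace ℝ F]

def ballImageHull (K : Set (E →L[ℝ] F)) : Set F :=
  closure (convexHull ℝ (insert 0 (image2 (fun A w => A w) K (closedBall 0 1))))

theorem zero_mem_ballImageHull (K : Set (E →L[ℝ] F)) : (0 : F) ∈ ballImageHull K :=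
  subset_closure (subset_convexHull ℝ _ (mem_insert _ _))

theorem IsCompact.isCompact_ballImageHull [CompleteSpace F] {K : Set (E →L[ℝ] F)}
    (hK : IsCompact K) (hKc : ∀ A ∈ K, IsCompactOperator A) : IsCompact (ballImageHull K) :=
  (totallyBounded_closure.mpr (totallyBounded_convexHull.mpr
    ((hK.totallyBounded_image2_apply_closedBall hKc 1).insert 0))).isCompact_of_isClosed
    isClosed_closure

theorem integral_apply_mem_smul_ballImageHull [CompleteSpace F] {α : Type*} [MeasurableSpace α]
    {μ : Measure α} {H : α → E →L[ℝ] F} {K : Set (E →L[ℝ] F)} (hH : ∀ᵐ x ∂μ, H x ∈ K)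
    {f : α → E} {φ : α → ℝ} (hφ : Integrable φ μ) (hf : ∀ᵐ x ∂μ, ‖f x‖ ≤ φ x)
    (hint : Integrable (fun x => H x (f x)) μ) :
    ∫ x, H x (f x) ∂μ ∈ (∫ x, φ x ∂μ) • ballImageHull K := by
  have h0 := zero_mem_ballImageHull K
  refine integral_mem_smul_of_ae_mem_smul (D := ballImageHull K) (convex_convexHull ℝ _).closure
    isClosed_closure ⟨0, h0⟩ hφ (hf.mono fun x hx => (norm_nonneg _).trans hx) hint ?_
  filter_upwards [hH, hf] with x hHx hfx
  rcases ((norm_nonneg _).trans hfx).eq_or_lt with hφx | hφx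
  · rw [← hφx, zero_smul_set ⟨0, h0⟩, norm_le_zero_iff.mp (hfx.trans hφx.ge), map_zero]
    rfl
  have hball : (φ x)⁻¹ • f x ∈ closedBall (0 : E) 1 := by
    rw [mem_closedBall_zero_iff, norm_smul, norm_inv, Real.norm_of_nonneg hφx.le]
    exact inv_mul_le_one_of_le₀ hfx hφx.le
  refine ⟨H x ((φ x)⁻¹ • f x), subset_closure (subset_convexHull ℝ _
    (mem_insert_of_mem _ (mem_image2_of_mem hHx hball))), ?_⟩
  simp only [map_smul, smul_inv_smul₀ hφx.ne']

end BallImageHull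

theorem exists_pos_forall_abs_intervalIntegral_lt {φ : ℝ → ℝ} {T : ℝ}
    (hφ : IntegrableOn φ (Icc 0 T)) {ε : ℝ} (hε : 0 < ε) :
    ∃ δ > 0, ∀ x ∈ Icc 0 T, ∀ y ∈ Icc 0 T, |y - x| < δ → |∫ s in x..y, φ s| < ε := by
  have hφi : ∀ x ∈ Icc 0 T, IntervalIntegrable φ volume 0 x := fun x hx =>
    (hφ.mono_set (uIcc_of_le hx.1 ▸ Icc_subset_Icc_right hx.2)).intervalIntegrable
  have hcont : ContinuousOn (fun x => ∫ s in (0 : ℝ)..x, φ s) (Icc 0 T) := by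
    rcases le_or_gt 0 T with hT | hT
    · exact intervalIntegral.continuousOn_primitive_interval (uIcc_of_le hT ▸ hφ) |>.mono
        Icc_subset_uIcc
    · simp [Icc_eq_empty_of_lt hT]
  obtain ⟨δ, hδ, h⟩ := Metric.uniformContinuousOn_iff.mp
    (isCompact_Icc.uniformContinuousOn_of_continuous hcont) ε hε
  refine ⟨δ, hδ, fun x hx y hy hxy => ?_⟩
  rw [← intervalIntegral.integral_interval_sub_left (hφi y hy) (hφi x hx)]
  exact h y hy x hx (by rwa [Real.dist_eq])

section Volterra

variable {W : Type*} [NormedAddCommGroup W] {T : ℝ} {φ : ℝ → ℝ} {f : ℝ → W}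

def integrablyBoundedBy (T : ℝ) (φ : ℝ → ℝ) : Set (ℝ → W) :=
  {f | AEStronglyMeasurable f (volume.restrict (Icc 0 T)) ∧
    ∀ᵐ s ∂volume.restrict (Icc 0 T), ‖f s‖ ≤ φ s}

theorem intervalIntegral_mem_Icc_of_mem_integrablyBoundedBy (hf : f ∈ integrablyBoundedBy T φ)
    (hφ : IntegrableOn φ (Icc 0 T)) {c : ℝ} (hc : c ∈ Icc 0 T) :
    ∫ s in (0 : ℝ)..c, φ s ∈ Icc 0 (∫ s in (0 : ℝ)..T, φ s) := by
  have hφ0 : 0 ≤ᵐ[volume.restrict (Icc 0 T)] φ := hf.2.mono fun _ hs => (norm_nonneg _).trans hs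
  exact ⟨intervalIntegral.integral_nonneg_of_ae_restrict hc.1
      (ae_restrict_of_ae_restrict_of_subset (Icc_subset_Icc_right hc.2) hφ0),
    intervalIntegral.integral_mono_interval le_rfl hc.1 hc.2
      (ae_restrict_of_ae_restrict_of_subset Ioc_subset_Icc_self hφ0)
      ((intervalIntegrable_iff_integrableOn_Icc_of_le (hc.1.trans hc.2)).mpr hφ)⟩

variable [NormedSpace ℝ W]

/-- The operator `𝒢` of the statement. -/
noncomputable def volterraIntegral (G : ℝ → W →L[ℝ] W) (f : ℝ → W) (t : ℝ) : W :=
  ∫ s in (0 : ℝ)..t, G (t - s) (f s)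

theorem norm_intervalIntegral_apply_le (hf : f ∈ integrablyBoundedBy T φ)
    (hφ : IntegrableOn φ (Icc 0 T)) {H : ℝ → W →L[ℝ] W} {K : ℝ} (hK : 0 ≤ K)
    {a b : ℝ} (ha : 0 ≤ a) (hab : a ≤ b) (hb : b ≤ T) (hH : ∀ s ∈ Ioc a b, ‖H s‖ ≤ K) :
    ‖∫ s in a..b, H s (f s)‖ ≤ K * ∫ s in a..b, φ s := by
  have hsub : Ioc a b ⊆ Icc 0 T := fun s hs => ⟨ha.trans hs.1.le, hs.2.trans hb⟩
  rw [← intervalIntegral.integral_const_mul]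
  refine intervalIntegral.norm_integral_le_of_norm_le hab ?_
    (((intervalIntegrable_iff_integrableOn_Icc_of_le hab).mpr
      (hφ.mono_set (Icc_subset_Icc ha hb))).const_mul K)
  have := (ae_restrict_iff' measurableSet_Ioc).mp (ae_restrict_of_ae_restrict_of_subset hsub hf.2)
  filter_upwards [this] with s hs hsab
  calc ‖H s (f s)‖ ≤ ‖H s‖ * ‖f s‖ := (H s).le_opNorm _
    _ ≤ K * φ s := mul_le_mul (hH s hsab) (hs hsab) (norm_nonneg _) hK

theorem intervalIntegrable_comp_sub_apply {G : ℝ → W →L[ℝ] W} (hGnorm : ContinuousOn G (Ioc 0 T))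
    {M : ℝ} (hM : ∀ r ∈ Icc 0 T, ‖G r‖ ≤ M) (hφ : IntegrableOn φ (Icc 0 T))
    (hf : f ∈ integrablyBoundedBy T φ) {t : ℝ} (ht : t ∈ Icc 0 T) :
    IntervalIntegrable (fun s => G (t - s) (f s)) volume 0 t := by
  have hsub : Ioo 0 t ⊆ Icc 0 T := fun s hs => ⟨hs.1.le, hs.2.le.trans ht.2⟩
  have hmeas : AEStronglyMeasurable (fun s => G (t - s) (f s)) (volume.restrict (Ioo 0 t)) := by
    have hGt : ContinuousOn (fun s => G (t - s)) (Ioo 0 t) :=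
      hGnorm.comp (by fun_prop) fun s hs => ⟨by linarith [hs.2], by linarith [hs.1, ht.2]⟩
    exact (ContinuousLinearMap.id ℝ (W →L[ℝ] W)).aestronglyMeasurable_comp₂
      (hGt.aestronglyMeasurable measurableSet_Ioo)
      (hf.1.mono_measure (Measure.restrict_mono hsub le_rfl))
  rw [intervalIntegrable_iff_integrableOn_Ioo_of_le ht.1]
  refine Integrable.mono' ((hφ.mono_set hsub).const_mul M) hmeas ?_
  filter_upwards [ae_restrict_mem measurableSet_Ioo,
    ae_restrict_of_ae_restrict_of_subset hsub hf.2] with s hs hfs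
  calc ‖G (t - s) (f s)‖ ≤ ‖G (t - s)‖ * ‖f s‖ := (G (t - s)).le_opNorm _
    _ ≤ M * φ s := mul_le_mul (hM _ ⟨by linarith [hs.2], by linarith [hs.1, ht.2]⟩) hfs
        (norm_nonneg _) ((norm_nonneg _).trans (hM t ht))

theorem norm_intervalIntegral_comp_sub_apply_le (hf : f ∈ integrablyBoundedBy T φ)
    (hφ : IntegrableOn φ (Icc 0 T)) {G : ℝ → W →L[ℝ] W} {M : ℝ} (hM : ∀ r ∈ Icc 0 T, ‖G r‖ ≤ M)
    {a b t : ℝ} (ha : 0 ≤ a) (hab : a ≤ b) (hbt : b ≤ t) (ht : t ≤ T) :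
    ‖∫ s in a..b, G (t - s) (f s)‖ ≤ M * ∫ s in a..b, φ s :=
  norm_intervalIntegral_apply_le hf hφ ((norm_nonneg _).trans (hM t ⟨by linarith, ht⟩)) ha hab
    (hbt.trans ht) fun s hs => hM _ ⟨by linarith [hs.2], by linarith [hs.1]⟩

theorem intervalIntegral_comp_sub_apply_mem_smul_ballImageHull [CompleteSpace W]
    {G : ℝ → W →L[ℝ] W} (hGnorm : ContinuousOn G (Ioc 0 T)) {M : ℝ}
    (hM : ∀ r ∈ Icc 0 T, ‖G r‖ ≤ M) (hφ : IntegrableOn φ (Icc 0 T))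
    (hf : f ∈ integrablyBoundedBy T φ) {K : Set (W →L[ℝ] W)} {c t : ℝ} (hc : c ∈ Icc 0 t)
    (ht : t ∈ Icc 0 T) (hK : ∀ s ∈ Ioc 0 c, G (t - s) ∈ K) :
    ∫ s in (0 : ℝ)..c, G (t - s) (f s) ∈ Icc 0 (∫ s in (0 : ℝ)..T, φ s) • ballImageHull K := by
  have hsub : Ioc 0 c ⊆ Icc 0 T := fun s hs => ⟨hs.1.le, hs.2.trans (hc.2.trans ht.2)⟩
  refine smul_set_subset_smul
    (intervalIntegral_mem_Icc_of_mem_integrablyBoundedBy hf hφ ⟨hc.1, hc.2.trans ht.2⟩) ?_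
  rw [intervalIntegral.integral_of_le hc.1, intervalIntegral.integral_of_le hc.1]
  exact integral_apply_mem_smul_ballImageHull
    ((ae_restrict_iff' measurableSet_Ioc).mpr (ae_of_all _ hK)) (hφ.mono_set hsub)
    (ae_restrict_of_ae_restrict_of_subset hsub hf.2)
    ((intervalIntegrable_comp_sub_apply hGnorm hM hφ hf ht).mono_set
      (uIcc_subset_uIcc_left (Icc_subset_uIcc hc))).1

theorem totallyBounded_image_volterraIntegral [CompleteSpace W] {G : ℝ → W →L[ℝ] W}
    (hGcpt : ∀ r ∈ Ioc 0 T, IsCompactOperator (G r)) (hGnorm : ContinuousOn G (Ioc 0 T))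
    {M : ℝ} (hM : ∀ r ∈ Icc 0 T, ‖G r‖ ≤ M) (hφ : IntegrableOn φ (Icc 0 T))
    {t : ℝ} (ht : t ∈ Icc 0 T) :
    TotallyBounded ((fun f => volterraIntegral G f t) '' integrablyBoundedBy T φ) := by
  have hM0 : 0 ≤ M := (norm_nonneg _).trans (hM t ht)
  refine totallyBounded_of_forall_subset_thickening fun ε hε => ?_
  obtain ⟨δ, hδ, hφδ⟩ := exists_pos_forall_abs_intervalIntegral_lt hφ (ε := ε / (M + 1))
    (by positivity)
  -- On `(0, c]` the kernel `G (t - s)` ranges over the norm-compact set `G '' Icc (δ / 2) T`.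
  set c := max (t - δ / 2) 0
  have hc : c ∈ Icc 0 t := ⟨le_max_right _ _, max_le (by linarith) ht.1⟩
  have hKsub : Icc (δ / 2) T ⊆ Ioc 0 T := fun r hr => ⟨by linarith [hr.1], hr.2⟩
  have hD : IsCompact (ballImageHull (G '' Icc (δ / 2) T)) :=
    (isCompact_Icc.image_of_continuousOn (hGnorm.mono hKsub)).isCompact_ballImageHull
      (by rintro _ ⟨r, hr, rfl⟩; exact hGcpt r (hKsub hr))
  refine ⟨Icc 0 (∫ s in (0 : ℝ)..T, φ s) • ballImageHull (G '' Icc (δ / 2) T),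
    (isCompact_Icc.smul_set hD).totallyBounded, ?_⟩
  rintro _ ⟨f, hf, rfl⟩
  have hint := intervalIntegrable_comp_sub_apply hGnorm hM hφ hf ht
  simp only [volterraIntegral]
  rw [← intervalIntegral.integral_add_adjacent_intervals
    (hint.mono_set (uIcc_subset_uIcc_left (Icc_subset_uIcc hc)))
    (hint.mono_set (uIcc_subset_uIcc_right (Icc_subset_uIcc hc)))]
  refine mem_thickening_iff.mpr ⟨∫ s in (0 : ℝ)..c, G (t - s) (f s), ?_, ?_⟩
  · refine intervalIntegral_comp_sub_apply_mem_smul_ballImageHull hGnorm hM hφ hf hc ht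
      fun s hs => mem_image_of_mem G ⟨?_, by linarith [hs.1, ht.2]⟩
    linarith [(le_max_iff.mp hs.2).resolve_right hs.1.not_ge]
  · have htc : |t - c| < δ := by
      rw [abs_of_nonneg (by linarith [hc.2])]
      linarith [le_max_left (t - δ / 2) 0]
    have hφct := (le_abs_self _).trans_lt (hφδ c ⟨hc.1, hc.2.trans ht.2⟩ t ht htc)
    rw [dist_self_add_left]
    calc ‖∫ s in c..t, G (t - s) (f s)‖ ≤ M * ∫ s in c..t, φ s :=
          norm_intervalIntegral_comp_sub_apply_le hf hφ hM hc.1 hc.2 le_rfl ht.2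
      _ ≤ M * (ε / (M + 1)) := by gcongr
      _ < ε := by
        rw [mul_div_assoc', div_lt_iff₀ (by positivity)]
        nlinarith

theorem volterraIntegral_sub_eq {G : ℝ → W →L[ℝ] W} (hGnorm : ContinuousOn G (Ioc 0 T))
    {M : ℝ} (hM : ∀ r ∈ Icc 0 T, ‖G r‖ ≤ M) (hφ : IntegrableOn φ (Icc 0 T))
    (hf : f ∈ integrablyBoundedBy T φ) {a b c : ℝ} (hc : c ∈ Icc 0 a) (hab : a ≤ b) (hb : b ≤ T) :
    volterraIntegral G f b - volterraIntegral G f a =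
      (∫ s in (0 : ℝ)..c, (G (b - s) - G (a - s)) (f s)) +
        (∫ s in c..a, (G (b - s) - G (a - s)) (f s)) + ∫ s in a..b, G (b - s) (f s) := by
  have ha0 : 0 ≤ a := hc.1.trans hc.2
  have hintb := intervalIntegrable_comp_sub_apply hGnorm hM hφ hf ⟨ha0.trans hab, hb⟩
  have hinta := intervalIntegrable_comp_sub_apply hGnorm hM hφ hf ⟨ha0, hab.trans hb⟩
  have hintb' := hintb.mono_set (uIcc_subset_uIcc_left (Icc_subset_uIcc ⟨ha0, hab⟩))
  have hdiff : IntervalIntegrable (fun s => (G (b - s) - G (a - s)) (f s)) volume 0 a :=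
    hintb'.sub hinta
  have hc' := Icc_subset_uIcc hc
  rw [intervalIntegral.integral_add_adjacent_intervals (hdiff.mono_set (uIcc_subset_uIcc_left hc'))
    (hdiff.mono_set (uIcc_subset_uIcc_right hc')), volterraIntegral, volterraIntegral,
    ← intervalIntegral.integral_add_adjacent_intervals hintb'
      (hintb.mono_set (uIcc_subset_uIcc_right (Icc_subset_uIcc ⟨ha0, hab⟩))),
    add_sub_right_comm, ← intervalIntegral.integral_sub hintb' hinta]
  rfl

theorem norm_volterraIntegral_sub_le {G : ℝ → W →L[ℝ] W} (hGnorm : ContinuousOn G (Ioc 0 T))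
    {M : ℝ} (hM : ∀ r ∈ Icc 0 T, ‖G r‖ ≤ M) (hφ : IntegrableOn φ (Icc 0 T))
    (hf : f ∈ integrablyBoundedBy T φ) {a b c κ : ℝ} (hc : c ∈ Icc 0 a) (hab : a ≤ b)
    (hb : b ≤ T) (hκ : 0 ≤ κ) (hGκ : ∀ s ∈ Ioc 0 c, ‖G (b - s) - G (a - s)‖ ≤ κ) :
    ‖volterraIntegral G f b - volterraIntegral G f a‖ ≤
      κ * (∫ s in (0 : ℝ)..c, φ s) + 2 * M * (∫ s in c..a, φ s) + M * ∫ s in a..b, φ s := by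
  have ha0 : 0 ≤ a := hc.1.trans hc.2
  have hM0 : 0 ≤ M := (norm_nonneg _).trans (hM b ⟨ha0.trans hab, hb⟩)
  rw [volterraIntegral_sub_eq hGnorm hM hφ hf hc hab hb]
  refine norm_add₃_le.trans (add_le_add_three ?_ ?_ ?_)
  · exact norm_intervalIntegral_apply_le hf hφ hκ le_rfl hc.1 (hc.2.trans (hab.trans hb)) hGκ
  · refine norm_intervalIntegral_apply_le hf hφ (by positivity) hc.1 hc.2 (hab.trans hb)
      fun s hs => (norm_sub_le _ _).trans ?_
    linarith [hM (b - s) ⟨by linarith [hs.2], by linarith [hs.1, hc.1]⟩,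
      hM (a - s) ⟨by linarith [hs.2], by linarith [hs.1, hc.1]⟩]
  · exact norm_intervalIntegral_comp_sub_apply_le hf hφ hM ha0 hab le_rfl hb

theorem exists_pos_forall_norm_volterraIntegral_sub_lt {G : ℝ → W →L[ℝ] W}
    (hGnorm : ContinuousOn G (Ioc 0 T)) {M : ℝ} (hM : ∀ r ∈ Icc 0 T, ‖G r‖ ≤ M)
    (hφ : IntegrableOn φ (Icc 0 T)) {ε : ℝ} (hε : 0 < ε) :
    ∃ η > 0, ∀ f ∈ integrablyBoundedBy T φ, ∀ a ∈ Icc 0 T, ∀ b ∈ Icc 0 T, a ≤ b → b - a < η →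
      ‖volterraIntegral G f b - volterraIntegral G f a‖ < ε := by
  rcases (Icc (0 : ℝ) T).eq_empty_or_nonempty with hT | ⟨r, hr⟩
  · exact ⟨1, one_pos, fun f _ a ha => by simp [hT] at ha⟩
  have hM0 : 0 ≤ M := (norm_nonneg _).trans (hM r hr)
  set C := ∫ s in (0 : ℝ)..T, φ s
  set ε' := ε / (3 * (2 * M + 1))
  obtain ⟨δ, hδ, hφδ⟩ := exists_pos_forall_abs_intervalIntegral_lt hφ (ε := ε') (by positivity)
  -- Away from the singular point `0`, `G` is uniformly norm-continuous.
  have hKsub : Icc (δ / 2) T ⊆ Ioc 0 T := fun r hr => ⟨by linarith [hr.1], hr.2⟩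
  obtain ⟨γ, hγ, hGγ⟩ := Metric.uniformContinuousOn_iff.mp
    (isCompact_Icc.uniformContinuousOn_of_continuous (hGnorm.mono hKsub))
    (ε / (3 * (|C| + 1))) (by positivity)
  refine ⟨min γ δ, lt_min hγ hδ, fun f hf a ha b hb hab hba => ?_⟩
  set c := max (a - δ / 2) 0
  have hc : c ∈ Icc 0 a := ⟨le_max_right _ _, max_le (by linarith) ha.1⟩
  have hGκ : ∀ s ∈ Ioc 0 c, ‖G (b - s) - G (a - s)‖ ≤ ε / (3 * (|C| + 1)) := fun s hs => by
    have := (le_max_iff.mp hs.2).resolve_right hs.1.not_ge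
    rw [← dist_eq_norm]
    exact (hGγ _ ⟨by linarith, by linarith [hs.1, hb.2]⟩ _ ⟨by linarith, by linarith [hs.1, ha.2]⟩
      (by rw [Real.dist_eq, abs_of_nonneg (by linarith)]; linarith [min_le_left γ δ])).le
  have hφ_le : ∀ {x y : ℝ}, x ∈ Icc 0 T → y ∈ Icc 0 T → |y - x| < δ → ∫ s in x..y, φ s ≤ ε' :=
    fun hx hy hxy => ((le_abs_self _).trans_lt (hφδ _ hx _ hy hxy)).le
  have hca : ∫ s in c..a, φ s ≤ ε' := hφ_le ⟨hc.1, hc.2.trans ha.2⟩ ha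
    (by rw [abs_of_nonneg (by linarith [hc.2])]; linarith [le_max_left (a - δ / 2) 0])
  have hab' : ∫ s in a..b, φ s ≤ ε' := hφ_le ha hb
    (by rw [abs_of_nonneg (by linarith)]; linarith [min_le_right γ δ])
  have k₁ : ε / (3 * (|C| + 1)) * ∫ s in (0 : ℝ)..c, φ s < ε / 3 := calc
    _ ≤ ε / (3 * (|C| + 1)) * |C| := by
      gcongr
      exact (intervalIntegral_mem_Icc_of_mem_integrablyBoundedBy hf hφ
        ⟨hc.1, hc.2.trans ha.2⟩).2.trans (le_abs_self C)
    _ < ε / 3 := by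
      rw [div_mul_eq_mul_div, div_lt_div_iff₀ (by positivity) (by positivity)]
      nlinarith [abs_nonneg C]
  have k₂ : M * ε' ≤ ε / 6 := by
    rw [mul_div_assoc', div_le_div_iff₀ (by positivity) (by positivity)]
    nlinarith
  calc _ ≤ _ := norm_volterraIntegral_sub_le hGnorm hM hφ hf hc hab hb.2 (by positivity) hGκ
    _ ≤ ε / (3 * (|C| + 1)) * (∫ s in (0 : ℝ)..c, φ s) + 2 * M * ε' + M * ε' := by gcongr
    _ < ε := by linarith

theorem uniformEquicontinuous_of_forall_eq_volterraIntegral {G : ℝ → W →L[ℝ] W}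
    (hGnorm : ContinuousOn G (Ioc 0 T)) {M : ℝ} (hM : ∀ r ∈ Icc 0 T, ‖G r‖ ≤ M)
    (hφ : IntegrableOn φ (Icc 0 T)) {ι : Type*} {F : ι → Icc (0 : ℝ) T → W}
    (hF : ∀ i, ∃ f ∈ integrablyBoundedBy T φ, ∀ t, F i t = volterraIntegral G f t) :
    UniformEquicontinuous F := by
  refine Metric.uniformEquicontinuous_iff.mpr fun ε hε => ?_
  obtain ⟨η, hη, h⟩ := exists_pos_forall_norm_volterraIntegral_sub_lt hGnorm hM hφ hε
  refine ⟨η, hη, fun x y hxy i => ?_⟩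
  obtain ⟨f, hf, hFf⟩ := hF i
  rw [Subtype.dist_eq, Real.dist_eq] at hxy
  rw [hFf, hFf, dist_eq_norm]
  rcases le_total (x : ℝ) y with hle | hle
  · rw [norm_sub_rev]
    exact h f hf x x.2 y y.2 hle (by linarith [neg_abs_le ((x : ℝ) - y)])
  · exact h f hf y y.2 x x.2 hle (by linarith [le_abs_self ((x : ℝ) - y)])

end Volterra

theorem stmt_17_general {W : Type*}
    [NormedAddCommGroup W] [NormedSpace ℝ W] [CompleteSpace W]
    (T : ℝ)
    (G : ℝ → W →L[ℝ] W)
    (hGsc : ∀ w : W, ContinuousOn (fun t : ℝ => G t w) (Set.Icc 0 T))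
    (hGcpt : ∀ t ∈ Set.Ioc (0 : ℝ) T, IsCompactOperator (⇑(G t)))
    (hGnorm : ContinuousOn G (Set.Ioc 0 T))
    (g : ℕ → ℝ → W)
    (hgmeas : ∀ n : ℕ, AEStronglyMeasurable (g n) (volume.restrict (Set.Icc (0 : ℝ) T)))
    (φ : ℝ → ℝ) (hφint : Integrable φ (volume.restrict (Set.Icc (0 : ℝ) T)))
    (hbdd : ∀ n : ℕ, ∀ᵐ t ∂(volume.restrict (Set.Icc (0 : ℝ) T)), ‖g n t‖ ≤ φ t) :
    IsCompact (closure {F : C(Set.Icc (0 : ℝ) T, W) |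
      ∃ n : ℕ, ∀ t : Set.Icc (0 : ℝ) T,
        F t = ∫ s in (0 : ℝ)..(t : ℝ), G ((t : ℝ) - s) (g n s)}) := by
  obtain ⟨M, hM⟩ := isCompact_Icc.exists_bound_of_continuousOn_apply hGsc
  have hg : ∀ n, g n ∈ integrablyBoundedBy T φ := fun n => ⟨hgmeas n, hbdd n⟩
  refine ContinuousMap.isCompact_closure_of_equicontinuous
    (uniformEquicontinuous_of_forall_eq_volterraIntegral hGnorm hM hφint
      fun ⟨_, n, hn⟩ => ⟨g n, hg n, hn⟩).equicontinuous fun t => ?_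
  refine ⟨closure ((fun f => volterraIntegral G f t) '' integrablyBoundedBy T φ), ?_, ?_⟩
  · exact (totallyBounded_closure.mpr (totallyBounded_image_volterraIntegral hGcpt hGnorm hM hφint
      t.2)).isCompact_of_isClosed isClosed_closure
  · rintro F ⟨n, hn⟩
    exact subset_closure ⟨g n, hg n, (hn t).symm⟩

/-- if `(gₙ) ⊂ L¹([0,T];W)` is integrably bounded, then the sequence
`(𝒢 gₙ)(t) = ∫₀ᵗ G(t-s) gₙ(s) ds` is relatively compact in `C([0,T];W)`. -/
theorem stmt_17 {W : Type*}
    [NormedAddCommGroup W] [NormedSpace ℝ W] [CompleteSpace W]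
    (T : ℝ) (hT : 0 < T)
    (G : ℝ → W →L[ℝ] W)
    (hGsc : ∀ w : W, ContinuousOn (fun t : ℝ => G t w) (Set.Icc 0 T))
    (hG0 : G 0 = 1)
    (hGcpt : ∀ t ∈ Set.Ioc (0 : ℝ) T, IsCompactOperator (⇑(G t)))
    (hGnorm : ContinuousOn G (Set.Ioc 0 T))
    (g : ℕ → ℝ → W)
    (hgmeas : ∀ n : ℕ, AEStronglyMeasurable (g n) (volume.restrict (Set.Icc (0 : ℝ) T)))
    (φ : ℝ → ℝ) (hφint : Integrable φ (volume.restrict (Set.Icc (0 : ℝ) T)))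
    (hφpos : ∀ t : ℝ, 0 ≤ φ t)
    (hbdd : ∀ n : ℕ, ∀ᵐ t ∂(volume.restrict (Set.Icc (0 : ℝ) T)), ‖g n t‖ ≤ φ t) :
    IsCompact (closure {F : C(Set.Icc (0 : ℝ) T, W) |
      ∃ n : ℕ, ∀ t : Set.Icc (0 : ℝ) T,
        F t = ∫ s in (0 : ℝ)..(t : ℝ), G ((t : ℝ) - s) (g n s)}) :=
  stmt_17_general T G hGsc hGcpt hGnorm g hgmeas φ hφint hbdd
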